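/- arXiv:2310.19788 — 5 statements merged into one kernel-verified Lean document; each statement's English description precedes it below -/
import Mathlib

section
/- Let K ≥ 2, let σ : [K] → ℝ be positive, fix a* ∈ [K], and let S = √(Σ_{b ≠ a*} σ(b)²). With w*(a*) = σ(a*)/(σ(a*) + S) and w*(a) = σ(a)²/(S·(σ(a*) + S)) for a ≠ a*, one has σ(a*)²/w*(a*) + σ(a)²/w*(a) = (σ(a*) + S)² for every a ≠ a*. -/
open Finset

/-- The generalized Neyman allocation equalizes `Ω^{a*,a}(w) = σ(a*)²/w(a*) + σ(a)²/w(a)`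
across all suboptimal arms `a`, with common value `(σ(a*) + S)²`. -/
theorem gna_allocation_equalizes (K : ℕ) (hK : 2 ≤ K) (σ : Fin K → ℝ)
    (hσ : ∀ a, 0 < σ a) (astar : Fin K) :
    let S : ℝ := Real.sqrt (∑ b ∈ univ.erase astar, σ b ^ 2)
    let w : Fin K → ℝ := fun a =>
      if a = astar then σ astar / (σ astar + S)
      else σ a ^ 2 / (S * (σ astar + S))
    ∀ a, a ≠ astar →
      σ astar ^ 2 / w astar + σ a ^ 2 / w a = (σ astar + S) ^ 2 := by
  intro S w a ha
  have hsum : 0 < ∑ b ∈ univ.erase astar, σ b ^ 2 := by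
    apply Finset.sum_pos
    · intro i _; exact pow_pos (hσ i) 2
    · exact ⟨a, Finset.mem_erase.2 ⟨ha, Finset.mem_univ a⟩⟩
  have hS : 0 < S := Real.sqrt_pos.2 hsum
  have hsa := hσ astar
  have hσa := hσ a
  have hden : 0 < σ astar + S := by linarith
  simp only [w, if_pos rfl, if_neg ha]
  rw [div_div_eq_mul_div, div_div_eq_mul_div]
  field_simp
end

section
/- Let K ≥ 2, let σ : [K] → ℝ be positive, fix a* ∈ [K], and let S = √(Σ_{b ≠ a*} σ(b)²). Then for every w in the open probability simplex on [K] (w(a) > 0, Σ w(a) = 1), min_{a ≠ a*} 1/(σ(a*)²/w(a*) + σ(a)²/w(a)) ≤ 1/(σ(a*) + S)², and this bound is attained by w*(a*) = σ(a*)/(σ(a*)+S), w*(a) = σ(a)²/(S(σ(a*)+S)) for a ≠ a*. Hence sup_w min_{a≠a*} 1/(σ(a*)²/w(a*) + σ(a)²/w(a)) = 1/(σ(a*) + S)². -/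
open Finset

set_option maxHeartbeats 1000000

/-- The supremum over the open simplex of `min_{a ≠ a*} 1/(σ(a*)²/w(a*) + σ(a)²/w(a))`
equals `1/(σ(a*) + S)²`, attained by the generalized Neyman allocation. -/
theorem gna_allocation_isGreatest (K : ℕ) (hK : 2 ≤ K) (σ : Fin K → ℝ)
    (hσ : ∀ a, 0 < σ a) (astar : Fin K) :
    let S : ℝ := Real.sqrt (∑ b ∈ univ.erase astar, σ b ^ 2)
    IsGreatest
      {z : ℝ | ∃ w : Fin K → ℝ, (∀ a, 0 < w a) ∧ (∑ a, w a) = 1 ∧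
        z = ⨅ a : {a : Fin K // a ≠ astar},
          1 / (σ astar ^ 2 / w astar + σ (a : Fin K) ^ 2 / w a)}
      (1 / (σ astar + S) ^ 2) ∧
    ((⨅ a : {a : Fin K // a ≠ astar},
        1 / (σ astar ^ 2 / ((fun a' : Fin K =>
              if a' = astar then σ astar / (σ astar + S)
              else σ a' ^ 2 / (S * (σ astar + S))) astar)
          + σ (a : Fin K) ^ 2 / ((fun a' : Fin K =>
              if a' = astar then σ astar / (σ astar + S)
              else σ a' ^ 2 / (S * (σ astar + S))) a)))
      = 1 / (σ astar + S) ^ 2) := by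
  intro S
  have hnt : Nontrivial (Fin K) := Fin.nontrivial_iff_two_le.mpr hK
  obtain ⟨b0, hb0⟩ := exists_ne astar
  have hb0e : b0 ∈ univ.erase astar := mem_erase.mpr ⟨hb0, mem_univ _⟩
  have herase : (univ.erase astar).Nonempty := ⟨b0, hb0e⟩
  haveI : Nonempty {a : Fin K // a ≠ astar} := ⟨⟨b0, hb0⟩⟩
  have hsumpos : 0 < ∑ b ∈ univ.erase astar, σ b ^ 2 :=
    Finset.sum_pos (fun b _ => pow_pos (hσ b) 2) herase
  have hS : 0 < S := Real.sqrt_pos.mpr hsumpos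
  have hS2 : S ^ 2 = ∑ b ∈ univ.erase astar, σ b ^ 2 := Real.sq_sqrt hsumpos.le
  have hσs : 0 < σ astar := hσ astar
  have hσS : 0 < σ astar + S := by linarith
  -- the Neyman allocation
  set wst : Fin K → ℝ := fun a' : Fin K =>
      if a' = astar then σ astar / (σ astar + S)
      else σ a' ^ 2 / (S * (σ astar + S)) with hwst
  have hwstpos : ∀ a, 0 < wst a := by
    intro a
    rcases eq_or_ne a astar with h | h
    · have h' : wst a = σ astar / (σ astar + S) := by simp [hwst, h]
      rw [h']; exact div_pos hσs hσS
    · have h' : wst a = σ a ^ 2 / (S * (σ astar + S)) := by simp [hwst, h]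
      rw [h']; exact div_pos (pow_pos (hσ a) 2) (mul_pos hS hσS)
  have hwstsum : (∑ a, wst a) = 1 := by
    rw [← Finset.add_sum_erase _ _ (mem_univ astar)]
    have h1 : wst astar = σ astar / (σ astar + S) := by simp [hwst]
    have h2 : ∑ a ∈ univ.erase astar, wst a
        = ∑ a ∈ univ.erase astar, σ a ^ 2 / (S * (σ astar + S)) := by
      refine Finset.sum_congr rfl fun a ha => ?_
      simp [hwst, (mem_erase.mp ha).1]
    rw [h1, h2, ← Finset.sum_div, ← hS2]
    field_simp
  -- value at the Neyman allocation
  have hval : (⨅ a : {a : Fin K // a ≠ astar},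
      1 / (σ astar ^ 2 / wst astar + σ (a : Fin K) ^ 2 / wst a))
      = 1 / (σ astar + S) ^ 2 := by
    have hconst : ∀ a : Fin K, a ≠ astar →
        1 / (σ astar ^ 2 / wst astar + σ a ^ 2 / wst a)
          = 1 / (σ astar + S) ^ 2 := by
      intro a ha
      have hwa : wst a = σ a ^ 2 / (S * (σ astar + S)) := by simp [hwst, ha]
      have hws : wst astar = σ astar / (σ astar + S) := by simp [hwst]
      have hσa : 0 < σ a := hσ a
      rw [hwa, hws]
      have e1 : σ astar ^ 2 / (σ astar / (σ astar + S)) = σ astar * (σ astar + S) := by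
        field_simp
      have e2 : σ a ^ 2 / (σ a ^ 2 / (S * (σ astar + S))) = S * (σ astar + S) := by
        rw [div_div_eq_mul_div, mul_div_cancel_left₀ _ (pow_pos hσa 2).ne']
      rw [e1, e2, show σ astar * (σ astar + S) + S * (σ astar + S) = (σ astar + S) ^ 2 from by
        ring]
    have hc2 : (fun a : {a : Fin K // a ≠ astar} =>
        1 / (σ astar ^ 2 / wst astar + σ (a : Fin K) ^ 2 / wst a))
        = fun _ => 1 / (σ astar + S) ^ 2 := funext fun a => hconst a.1 a.2
    rw [iInf, hc2, ← iInf]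
    exact ciInf_const
  -- upper bound
  have hub : ∀ z ∈ {z : ℝ | ∃ w : Fin K → ℝ, (∀ a, 0 < w a) ∧ (∑ a, w a) = 1 ∧
        z = ⨅ a : {a : Fin K // a ≠ astar},
          1 / (σ astar ^ 2 / w astar + σ (a : Fin K) ^ 2 / w a)},
      z ≤ 1 / (σ astar + S) ^ 2 := by
    rintro z ⟨w, hw, hwsum, rfl⟩
    set t := w astar with ht'
    have ht : 0 < t := hw astar
    set T := ∑ a ∈ univ.erase astar, w a with hT'
    have hT : 0 < T := Finset.sum_pos (fun a _ => hw a) herase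
    have htT : t + T = 1 := by
      rw [ht', hT', Finset.add_sum_erase _ _ (mem_univ astar), hwsum]
    -- find a bad arm
    obtain ⟨b, hb, hble⟩ : ∃ b ∈ univ.erase astar, w b * (S ^ 2 / T) ≤ σ b ^ 2 := by
      apply Finset.exists_le_of_sum_le herase
      rw [← Finset.sum_mul, ← hT', ← hS2]
      rw [mul_div_cancel₀ _ hT.ne']
    have hbne : b ≠ astar := (mem_erase.mp hb).1
    have hwb : 0 < w b := hw b
    have hratio : S ^ 2 / T ≤ σ b ^ 2 / w b := (le_div_iff₀ hwb).mpr (by linarith [hble])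
    have hkey : (σ astar + S) ^ 2 ≤ σ astar ^ 2 / t + S ^ 2 / T := by
      rw [div_add_div _ _ ht.ne' hT.ne', le_div_iff₀ (by positivity)]
      have hT1 : T = 1 - t := by linarith
      have e : σ astar ^ 2 * T + S ^ 2 * t - (σ astar + S) ^ 2 * (t * T)
          = (σ astar * T - S * t) ^ 2 := by rw [hT1]; ring
      nlinarith [sq_nonneg (σ astar * T - S * t), e]
    have hΩ : (σ astar + S) ^ 2 ≤ σ astar ^ 2 / t + σ b ^ 2 / w b := by
      linarith
    have hbdd : BddBelow (Set.range fun a : {a : Fin K // a ≠ astar} =>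
        1 / (σ astar ^ 2 / w astar + σ (a : Fin K) ^ 2 / w a)) := by
      refine ⟨0, Set.forall_mem_range.mpr fun a => ?_⟩
      have h1 := hw astar
      have h2 := hw (a : Fin K)
      have h3 := hσ astar
      have h4 := hσ (a : Fin K)
      positivity
    refine ciInf_le_of_le hbdd ⟨b, hbne⟩ ?_
    exact one_div_le_one_div_of_le (by positivity) hΩ
  exact ⟨⟨⟨wst, hwstpos, hwstsum, hval.symm⟩, hub⟩, hval⟩
end

section
/- Let K ≥ 2 and σ : [K] → ℝ positive, and let Δ > 0. Then sup over w in the open simplex of min_{a* ∈ [K], a ≠ a*} Δ²/(2(σ(a*)²/w(a*) + σ(a)²/w(a))) ≤ min_{a* ∈ [K]} Δ²/(2(σ(a*) + √(Σ_{b≠a*} σ(b)²))²). -/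
open Finset

/-- Inequalities of lower bounds: the best-arm-agnostic worst-case rate is no larger
than the best-arm-aware uniform lower bound rate. -/
theorem agnostic_le_aware (K : ℕ) (hK : 2 ≤ K) (σ : Fin K → ℝ) (hσ : ∀ a, 0 < σ a)
    (Δ : ℝ) (hΔ : 0 < Δ) :
    sSup {z : ℝ | ∃ w : Fin K → ℝ, (∀ a, 0 < w a) ∧ (∑ a, w a) = 1 ∧
        z = ⨅ p : {p : Fin K × Fin K // p.2 ≠ p.1},
          Δ ^ 2 / (2 * (σ (p : Fin K × Fin K).1 ^ 2 / w (p : Fin K × Fin K).1 +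
                σ (p : Fin K × Fin K).2 ^ 2 / w (p : Fin K × Fin K).2))}
      ≤ ⨅ astar : Fin K,
          Δ ^ 2 / (2 * (σ astar + Real.sqrt (∑ b ∈ univ.erase astar, σ b ^ 2)) ^ 2) := by
  have hKpos : 0 < K := by omega
  haveI : Nonempty (Fin K) := ⟨⟨0, hKpos⟩⟩
  apply Real.sSup_le
  · rintro z ⟨w, hw, hsum, rfl⟩
    apply le_ciInf
    intro astar
    -- setup
    have hne : (univ.erase astar).Nonempty := by
      have : 1 ≤ (univ.erase astar).card := by
        rw [Finset.card_erase_of_mem (mem_univ _), Finset.card_univ, Fintype.card_fin]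
        omega
      exact Finset.card_pos.mp this
    set S : ℝ := ∑ b ∈ univ.erase astar, σ b ^ 2 with hSdef
    set T : ℝ := ∑ b ∈ univ.erase astar, w b with hTdef
    have hS : 0 < S := Finset.sum_pos (fun b _ => pow_pos (hσ b) 2) hne
    have hT : 0 < T := Finset.sum_pos (fun b _ => hw b) hne
    have hTeq : T = 1 - w astar := by
      rw [hTdef, Finset.sum_erase_eq_sub (mem_univ astar), hsum]
    -- find a good arm a
    obtain ⟨a, haerase, hale⟩ := Finset.exists_le_of_sum_le hne
      (le_of_eq (by rw [← Finset.mul_sum, ← Finset.mul_sum, ← hSdef, ← hTdef, mul_comm]) :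
        ∑ b ∈ univ.erase astar, S * w b ≤ ∑ b ∈ univ.erase astar, T * σ b ^ 2)
    have ha : a ≠ astar := (Finset.mem_erase.mp haerase).1
    have hST : S / T ≤ σ a ^ 2 / w a := by
      rw [div_le_div_iff₀ hT (hw a)]
      linarith [hale]
    -- key inequality
    set s : ℝ := Real.sqrt S with hsdef
    have hs0 : 0 ≤ s := Real.sqrt_nonneg _
    have hs2 : s ^ 2 = S := Real.sq_sqrt hS.le
    have hx : 0 < w astar := hw astar
    have hx1 : 0 < 1 - w astar := hTeq ▸ hT
    have key1 : (σ astar + s) ^ 2 ≤ σ astar ^ 2 / w astar + S / (1 - w astar) := by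
      rw [div_add_div _ _ hx.ne' hx1.ne', le_div_iff₀ (by positivity)]
      nlinarith [sq_nonneg (σ astar - (σ astar + s) * w astar), hs2]
    have key : (σ astar + s) ^ 2 ≤ σ astar ^ 2 / w astar + σ a ^ 2 / w a := by
      have := hTeq ▸ hST
      linarith
    -- conclude via the pair (astar, a)
    have hbdd : BddBelow (Set.range fun p : {p : Fin K × Fin K // p.2 ≠ p.1} =>
        Δ ^ 2 / (2 * (σ (p : Fin K × Fin K).1 ^ 2 / w (p : Fin K × Fin K).1 +
          σ (p : Fin K × Fin K).2 ^ 2 / w (p : Fin K × Fin K).2))) := by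
      refine ⟨0, ?_⟩
      rintro x ⟨p, rfl⟩
      have h1 := hw (p : Fin K × Fin K).1
      have h2 := hw (p : Fin K × Fin K).2
      have g1 := hσ (p : Fin K × Fin K).1
      have g2 := hσ (p : Fin K × Fin K).2
      positivity
    calc (⨅ p : {p : Fin K × Fin K // p.2 ≠ p.1},
          Δ ^ 2 / (2 * (σ (p : Fin K × Fin K).1 ^ 2 / w (p : Fin K × Fin K).1 +
            σ (p : Fin K × Fin K).2 ^ 2 / w (p : Fin K × Fin K).2)))
        ≤ Δ ^ 2 / (2 * (σ astar ^ 2 / w astar + σ a ^ 2 / w a)) :=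
          ciInf_le hbdd ⟨(astar, a), ha⟩
      _ ≤ Δ ^ 2 / (2 * (σ astar + s) ^ 2) := by
          have h0 : 0 < σ astar := hσ astar
          have hpos : (0:ℝ) < 2 * (σ astar + s) ^ 2 := by positivity
          gcongr
          all_goals first | exact hpos | exact key | positivity
      _ = Δ ^ 2 / (2 * (σ astar + Real.sqrt (∑ b ∈ univ.erase astar, σ b ^ 2)) ^ 2) := rfl
  · apply Real.iInf_nonneg
    intro astar
    positivity
end

section
/- Let K ≥ 2, σ : [K] → ℝ positive, a* ∈ [K], and let w be a point of the open simplex that equalizes σ(a*)²/w(a*) + σ(a)²/w(a) = C across all a ≠ a* and satisfies w(a*) = √(σ(a*)² Σ_{a≠a*} w(a)²/σ(a)²). Then w(a) = σ(a)²/(S(σ(a*)+S)) for a ≠ a*, w(a*) = σ(a*)/(σ(a*)+S), and C = (σ(a*)+S)², where S = √(Σ_{b≠a*} σ(b)²). -/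
/-!
On the arms `a ≠ a*` the equalization condition says that `σ(a)² / w(a)` is a constant `D`,
so `w(a) = σ(a)² / D`. Substituting this into the balance condition gives `w(a*) = σ(a*) S / D`,
and into the simplex constraint gives `w(a*) + S² / D = 1`. Together these force
`D = S (σ(a*) + S)`, from which all three formulas follow, with `C = σ(a*)² / w(a*) + D`.
-/

open Finset

section Proportional

variable {ι : Type*} {s : Finset ι} {σ w : ι → ℝ} {D : ℝ}

lemma sum_eq_sum_sq_div_of_eq_sq_div (hw : ∀ a ∈ s, w a = σ a ^ 2 / D) :
    ∑ a ∈ s, w a = (∑ a ∈ s, σ a ^ 2) / D := by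
  rw [sum_div]
  exact sum_congr rfl hw

lemma sum_sq_div_sq_eq_of_eq_sq_div (hσ : ∀ a ∈ s, σ a ≠ 0) (hD : D ≠ 0)
    (hw : ∀ a ∈ s, w a = σ a ^ 2 / D) :
    ∑ a ∈ s, w a ^ 2 / σ a ^ 2 = (∑ a ∈ s, σ a ^ 2) / D ^ 2 := by
  rw [sum_div]
  refine sum_congr rfl fun a ha => ?_
  have := hσ a ha
  rw [hw a ha]
  field_simp

end Proportional

lemma Real.sqrt_sq_mul_div_sq {x q D : ℝ} (hx : 0 ≤ x) (hD : 0 ≤ D) :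
    √(x ^ 2 * (q / D ^ 2)) = x * √q / D := by
  rw [Real.sqrt_mul (sq_nonneg x), Real.sqrt_div' _ (sq_nonneg D),
    Real.sqrt_sq hx, Real.sqrt_sq hD, mul_div_assoc]

lemma scale_eq_of_balance {x S D w₀ : ℝ} (hD : D ≠ 0) (hbal : w₀ = x * S / D)
    (hsum : w₀ + S ^ 2 / D = 1) : D = S * (x + S) := by
  rw [hbal, ← add_div, div_eq_one_iff_eq hD] at hsum
  linarith

/-- KKT characterization of the generalized Neyman allocation: an allocation in the
open simplex equalizing `σ(a*)²/w(a*) + σ(a)²/w(a) = C` across `a ≠ a*` and satisfying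
`w(a*) = √(σ(a*)² Σ_{a≠a*} w(a)²/σ(a)²)` is the generalized Neyman allocation. -/
theorem kkt_characterization (K : ℕ) (hK : 2 ≤ K) (σ : Fin K → ℝ) (hσ : ∀ a, 0 < σ a)
    (astar : Fin K) (w : Fin K → ℝ) (hw : ∀ a, 0 < w a) (hsum : (∑ a, w a) = 1)
    (C : ℝ)
    (hC : ∀ a, a ≠ astar → σ astar ^ 2 / w astar + σ a ^ 2 / w a = C)
    (hbal : w astar =
      Real.sqrt (σ astar ^ 2 * ∑ a ∈ univ.erase astar, w a ^ 2 / σ a ^ 2)) :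
    let S : ℝ := Real.sqrt (∑ b ∈ univ.erase astar, σ b ^ 2)
    (∀ a, a ≠ astar → w a = σ a ^ 2 / (S * (σ astar + S))) ∧
      w astar = σ astar / (σ astar + S) ∧ C = (σ astar + S) ^ 2 := by
  intro S
  obtain ⟨a₀, ha₀⟩ := Fintype.exists_ne_of_one_lt_card (by rw [Fintype.card_fin]; omega) astar
  set D := σ a₀ ^ 2 / w a₀ with hD_def
  have hD : 0 < D := div_pos (pow_pos (hσ a₀) 2) (hw a₀)
  have hw_other : ∀ a ∈ univ.erase astar, w a = σ a ^ 2 / D := fun a ha => by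
    have hD_eq : σ a ^ 2 / w a = D := by linarith [hC a (ne_of_mem_erase ha), hC a₀ ha₀]
    rw [eq_div_iff hD.ne', ← hD_eq, mul_div_cancel₀ _ (hw a).ne']
  have hQ : 0 < ∑ b ∈ univ.erase astar, σ b ^ 2 :=
    sum_pos (fun b _ => pow_pos (hσ b) 2) ⟨a₀, mem_erase.mpr ⟨ha₀, mem_univ _⟩⟩
  have hS : 0 < S := Real.sqrt_pos.mpr hQ
  have hS_sq : S ^ 2 = ∑ b ∈ univ.erase astar, σ b ^ 2 := Real.sq_sqrt hQ.le
  have hw_star : w astar = σ astar * S / D := by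
    rw [hbal, sum_sq_div_sq_eq_of_eq_sq_div (fun a _ => (hσ a).ne') hD.ne' hw_other,
      Real.sqrt_sq_mul_div_sq (hσ astar).le hD.le]
  have hD_val : D = S * (σ astar + S) := by
    refine scale_eq_of_balance hD.ne' hw_star ?_
    rw [hS_sq, ← sum_eq_sum_sq_div_of_eq_sq_div hw_other, add_sum_erase _ _ (mem_univ _), hsum]
  have hσS : σ astar + S ≠ 0 := by linarith [hσ astar]
  have hw_star' : w astar = σ astar / (σ astar + S) := by
    rw [hw_star, hD_val]
    field_simp
  refine ⟨fun a ha => hD_val ▸ hw_other a (mem_erase.mpr ⟨ha, mem_univ _⟩), hw_star', ?_⟩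
  rw [← hC a₀ ha₀, ← hD_def, hw_star', hD_val]
  field_simp
end

section
/- Let μ : [K] → ℝ with a unique maximizer a*, and let w be in the open simplex with positive σ : [K] → ℝ. Then inf over (v : [K] → ℝ) such that argmax v ≠ a* of Σ_{a∈[K]} w(a)(v(a) - μ(a))²/(2σ(a)²) equals min_{a ≠ a*} (μ(a*) - μ(a))² / (2(σ(a*)²/w(a*) + σ(a)²/w(a))). -/
/-!
Put `p a = 2 σ(a)² / w(a)`, so that the objective is `∑ₐ (v a - μ a)² / p a`. If `v a* ≤ v a`, the
deviations `μ a* - v a*` and `v a - μ a` add up to at least `μ a* - μ a ≥ 0`, and Sedrakyan's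
inequality `x²/p + y²/q ≥ (x + y)²/(p + q)` shows that these two coordinates alone already cost
`(μ a* - μ a)² / (p a* + p a)`. The bound is attained by moving both coordinates to the
precision-weighted mean of `μ a*` and `μ a` and leaving all others at `μ`.
-/

lemma sq_div_add_le_of_le_add {p q s x y : ℝ} (hp : 0 < p) (hq : 0 < q) (hs : 0 ≤ s)
    (h : s ≤ x + y) : s ^ 2 / (p + q) ≤ x ^ 2 / p + y ^ 2 / q := by
  have sedrakyan := Finset.univ.sq_sum_div_le_sum_sq_div ![x, y] (g := ![p, q])
    (by simp [Fin.forall_fin_two, hp, hq])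
  simp only [Fin.sum_univ_two, Matrix.cons_val_zero, Matrix.cons_val_one] at sedrakyan
  calc s ^ 2 / (p + q) ≤ (x + y) ^ 2 / (p + q) := by gcongr
    _ ≤ x ^ 2 / p + y ^ 2 / q := sedrakyan

lemma weightedMean_sub_sq_div_add {p q m₁ m₂ : ℝ} (hp : 0 < p) (hq : 0 < q) :
    ((m₁ * q + m₂ * p) / (p + q) - m₁) ^ 2 / p + ((m₁ * q + m₂ * p) / (p + q) - m₂) ^ 2 / q
      = (m₁ - m₂) ^ 2 / (p + q) := by
  field_simp
  ring

lemma isLeast_ciInf_of_forall_mem_of_forall_exists_le {α ι : Type*}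
    [ConditionallyCompleteLinearOrder α] [Finite ι] [Nonempty ι] {S : Set α} {g : ι → α}
    (hmem : ∀ i, g i ∈ S) (hle : ∀ z ∈ S, ∃ i, g i ≤ z) : IsLeast S (⨅ i, g i) := by
  obtain ⟨i₀, hi₀⟩ := exists_eq_ciInf_of_finite (f := g)
  refine ⟨hi₀ ▸ hmem i₀, fun z hz => ?_⟩
  obtain ⟨i, hi⟩ := hle z hz
  exact (ciInf_le (Set.finite_range g).bddBelow i).trans hi

section WeightedSquares

variable {ι : Type*} [Fintype ι] {p : ι → ℝ} (μ : ι → ℝ) {astar : ι}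

lemma sq_sub_div_add_le_sum (hp : ∀ a, 0 < p a) {v : ι → ℝ} {a : ι} (ha : a ≠ astar)
    (hva : v astar ≤ v a) (hμa : μ a ≤ μ astar) :
    (μ astar - μ a) ^ 2 / (p astar + p a) ≤ ∑ b, (v b - μ b) ^ 2 / p b := by
  classical
  have hterm : ∀ b, 0 ≤ (v b - μ b) ^ 2 / p b := fun b => div_nonneg (sq_nonneg _) (hp b).le
  calc (μ astar - μ a) ^ 2 / (p astar + p a)
      ≤ (μ astar - v astar) ^ 2 / p astar + (v a - μ a) ^ 2 / p a :=
        sq_div_add_le_of_le_add (hp astar) (hp a) (sub_nonneg.2 hμa) (by linarith)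
    _ = ∑ b ∈ {astar, a}, (v b - μ b) ^ 2 / p b := by
        rw [Finset.sum_pair ha.symm, ← neg_sub, neg_sq]
    _ ≤ ∑ b, (v b - μ b) ^ 2 / p b :=
        Finset.sum_le_univ_sum_of_nonneg hterm

lemma exists_sum_sub_sq_div_eq (hp : ∀ a, 0 < p a) {a : ι} (ha : a ≠ astar) :
    ∃ v : ι → ℝ, v astar ≤ v a ∧
      ∑ b, (v b - μ b) ^ 2 / p b = (μ astar - μ a) ^ 2 / (p astar + p a) := by
  classical
  set m := (μ astar * p a + μ a * p astar) / (p astar + p a)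
  refine ⟨Function.update (Function.update μ astar m) a m, by simp [ha.symm], ?_⟩
  rw [Fintype.sum_eq_add astar a ha.symm fun b hb => by simp [hb.1, hb.2]]
  simpa [ha, ha.symm] using weightedMean_sub_sq_div_add (m₁ := μ astar) (m₂ := μ a) (hp astar) (hp a)

theorem sInf_sum_sub_sq_div_eq_iInf (hp : ∀ a, 0 < p a) (hμ : ∀ a, a ≠ astar → μ a ≤ μ astar)
    [Nonempty {a : ι // a ≠ astar}] :
    sInf {z : ℝ | ∃ v : ι → ℝ, (∃ a, a ≠ astar ∧ v astar ≤ v a) ∧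
        z = ∑ a, (v a - μ a) ^ 2 / p a}
      = ⨅ a : {a : ι // a ≠ astar}, (μ astar - μ a) ^ 2 / (p astar + p a) := by
  refine (isLeast_ciInf_of_forall_mem_of_forall_exists_le (fun a => ?_) ?_).csInf_eq
  · obtain ⟨v, hva, hv⟩ := exists_sum_sub_sq_div_eq μ hp a.2
    exact ⟨v, ⟨a, a.2, hva⟩, hv.symm⟩
  · rintro z ⟨v, ⟨a, ha, hva⟩, rfl⟩
    exact ⟨⟨a, ha⟩, sq_sub_div_add_le_sum μ hp ha hva (hμ a ha)⟩

end WeightedSquares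

theorem alt_hypothesis_reduction_general (K : ℕ) (hK : 2 ≤ K) (μ : Fin K → ℝ) (astar : Fin K)
    (hmax : ∀ a, a ≠ astar → μ a < μ astar)
    (σ : Fin K → ℝ) (hσ : ∀ a, 0 < σ a)
    (w : Fin K → ℝ) (hw : ∀ a, 0 < w a) :
    sInf {z : ℝ | ∃ v : Fin K → ℝ, (∃ a, a ≠ astar ∧ v astar ≤ v a) ∧
        z = ∑ a, w a * (v a - μ a) ^ 2 / (2 * σ a ^ 2)}
      = ⨅ a : {a : Fin K // a ≠ astar},
          (μ astar - μ (a : Fin K)) ^ 2 /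
            (2 * (σ astar ^ 2 / w astar + σ (a : Fin K) ^ 2 / w a)) := by
  obtain ⟨a₁, ha₁⟩ := Fintype.exists_ne_of_one_lt_card (by rw [Fintype.card_fin]; omega) astar
  have : Nonempty {a : Fin K // a ≠ astar} := ⟨⟨a₁, ha₁⟩⟩
  have hp : ∀ a, 0 < 2 * σ a ^ 2 / w a := fun a => by have := hσ a; have := hw a; positivity
  have hterm : ∀ a x, w a * x ^ 2 / (2 * σ a ^ 2) = x ^ 2 / (2 * σ a ^ 2 / w a) := fun a x => by
    rw [div_div_eq_mul_div, mul_comm]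
  have hden : ∀ a, 2 * (σ astar ^ 2 / w astar + σ a ^ 2 / w a)
      = 2 * σ astar ^ 2 / w astar + 2 * σ a ^ 2 / w a := fun a => by ring
  simp_rw [hterm, hden]
  exact sInf_sum_sub_sq_div_eq_iInf μ hp fun a ha => (hmax a ha).le

/-- Reduction of the alternative-hypothesis optimization to pairwise comparisons:
the infimum over mean vectors `v` under which some arm other than `a*` is weakly best of
`Σ_a w(a)(v(a)-μ(a))²/(2σ(a)²)` equals
`min_{a≠a*} (μ(a*)-μ(a))²/(2(σ(a*)²/w(a*) + σ(a)²/w(a)))`. -/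
theorem alt_hypothesis_reduction (K : ℕ) (hK : 2 ≤ K) (μ : Fin K → ℝ) (astar : Fin K)
    (hmax : ∀ a, a ≠ astar → μ a < μ astar)
    (σ : Fin K → ℝ) (hσ : ∀ a, 0 < σ a)
    (w : Fin K → ℝ) (hw : ∀ a, 0 < w a) (hsum : (∑ a, w a) = 1) :
    sInf {z : ℝ | ∃ v : Fin K → ℝ, (∃ a, a ≠ astar ∧ v astar ≤ v a) ∧
        z = ∑ a, w a * (v a - μ a) ^ 2 / (2 * σ a ^ 2)}
      = ⨅ a : {a : Fin K // a ≠ astar},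
          (μ astar - μ (a : Fin K)) ^ 2 /
            (2 * (σ astar ^ 2 / w astar + σ (a : Fin K) ^ 2 / w a)) :=
  alt_hypothesis_reduction_general K hK μ astar hmax σ hσ w hw
end
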